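/- Let T = {(Ōy, y) : y ∈ F_2^t} where Ō is the t×t anti-identity matrix over F_2 (zeros on the diagonal, ones elsewhere), with t even. Then for (x,y) drawn uniformly from T, the probability that h(x) = h(y) equals 1/2 + 2^{-t}·binomial(t, t/2) when t/2 is odd. -/

import Mathlib

/-!
Over `F₂`, `Ō = J - I`, so `Ōy = (∑ yⱼ)·(1,…,1) - y`: it fixes `y` when `h(y)` is even and complements
it when `h(y)` is odd, in which case `h(Ōy) = t - h(y)`. Hence `h(Ōy) = h(y)` exactly when `h(y)`
is even or `h(y) = t/2`, and for `t/2` odd these events are disjoint. Flipping one coordinate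
swaps the parity of `h`, so half of the `2^t` vectors have even weight, while `binom(t, t/2)`
have weight `t/2`.
-/

open Finset

namespace Matrix

def antiIdentity (ι R : Type*) [DecidableEq ι] [Zero R] [One R] : Matrix ι ι R :=
  of fun i j => if i = j then 0 else 1

theorem antiIdentity_mulVec {ι R : Type*} [Fintype ι] [DecidableEq ι] [Ring R] (y : ι → R) :
    antiIdentity ι R *ᵥ y = fun i => ∑ j, y j - y i := by
  ext i
  simp only [antiIdentity, mulVec, dotProduct, of_apply, ite_mul, zero_mul, one_mul, sum_ite,
    sum_const_zero, filter_ne, mem_univ, sum_erase_eq_sub, zero_add]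

end Matrix

section ZModTwo

variable {ι : Type*} [Fintype ι]

theorem sum_eq_hammingNorm (y : ι → ZMod 2) : ∑ i, y i = hammingNorm y := by
  calc ∑ i, y i = ∑ i, if y i ≠ 0 then 1 else 0 :=
        sum_congr rfl fun i _ => by generalize y i = a; revert a; decide
    _ = hammingNorm y := by rw [sum_boole]; rfl

theorem even_hammingNorm_iff_sum_eq_zero (y : ι → ZMod 2) :
    Even (hammingNorm y) ↔ ∑ i, y i = 0 := by
  rw [sum_eq_hammingNorm, ZMod.natCast_eq_zero_iff_even]

theorem hammingNorm_one_sub (y : ι → ZMod 2) :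
    hammingNorm (fun i => 1 - y i) = Fintype.card ι - hammingNorm y := by
  have h : ∀ a : ZMod 2, 1 - a ≠ 0 ↔ ¬ a ≠ 0 := by decide
  simp only [hammingNorm, h]
  have := card_filter_add_card_filter_not (s := univ) (fun i => y i ≠ 0)
  rw [card_univ] at this
  omega

variable [DecidableEq ι]

open Matrix in
theorem hammingNorm_antiIdentity_mulVec_eq_iff (y : ι → ZMod 2) :
    hammingNorm (antiIdentity ι (ZMod 2) *ᵥ y) = hammingNorm y ↔
      Even (hammingNorm y) ∨ 2 * hammingNorm y = Fintype.card ι := by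
  have hle : hammingNorm y ≤ Fintype.card ι := hammingNorm_le_card_fintype
  rw [antiIdentity_mulVec]
  by_cases hy : Even (hammingNorm y)
  · rw [(even_hammingNorm_iff_sum_eq_zero y).mp hy]
    simp only [zero_sub, ZMod.neg_eq_self_mod_two, hy, true_or]
  · have hsum : ∑ i, y i = 1 := by
      rw [even_hammingNorm_iff_sum_eq_zero] at hy
      generalize ∑ i, y i = a at hy ⊢; revert a; decide
    rw [hsum, hammingNorm_one_sub, or_iff_right hy]
    omega

theorem card_filter_hammingNorm_eq (k : ℕ) :
    #{y : ι → ZMod 2 | hammingNorm y = k} = (Fintype.card ι).choose k := by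
  rw [← card_univ, ← card_powersetCard]
  refine card_nbij' (fun y => ({i | y i ≠ 0} : Finset ι)) (fun s i => if i ∈ s then 1 else 0)
    ?_ ?_ ?_ ?_
  · intro y hy
    simpa [mem_powersetCard, hammingNorm] using hy
  · intro s hs
    simpa [hammingNorm] using hs
  · intro y _
    ext i
    simp only [mem_filter, mem_univ, true_and]
    generalize y i = a; revert a; decide
  · intro s _
    ext i
    by_cases hi : i ∈ s <;> simp [hi]

theorem two_mul_card_filter_even_hammingNorm [Nonempty ι] :
    2 * #{y : ι → ZMod 2 | Even (hammingNorm y)} = 2 ^ Fintype.card ι := by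
  obtain ⟨i₀⟩ := ‹Nonempty ι›
  have hflip :
      #{y : ι → ZMod 2 | Even (hammingNorm y)} = #{y : ι → ZMod 2 | ¬ Even (hammingNorm y)} := by
    refine card_equiv (Equiv.addRight (Pi.single i₀ 1)) fun y => ?_
    simp only [mem_filter, mem_univ, true_and, Equiv.coe_addRight, even_hammingNorm_iff_sum_eq_zero,
      Pi.add_apply, sum_add_distrib, sum_pi_single']
    generalize ∑ i, y i = a; revert a; decide
  have := card_filter_add_card_filter_not (s := (univ : Finset (ι → ZMod 2)))
    (fun y => Even (hammingNorm y))
  rw [card_univ, Fintype.card_fun, ZMod.card] at this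
  omega

/-- For the anti-identity matrix `Ō` over `F₂` (zeros on the diagonal, ones
elsewhere), with `t` even and `t/2` odd, the probability over uniform `y ∈ F₂^t`
(equivalently, over uniform `(x,y) ∈ T = {(Ōy, y)}`) that `h(Ōy) = h(y)` equals
`1/2 + 2^{-t}·binom(t, t/2)`. -/
theorem stmt_17 (t : ℕ) (ht : Even t) (ht2 : Odd (t / 2)) :
    ((univ.filter (fun y : Fin t → ZMod 2 =>
        hammingNorm ((Matrix.of fun i j : Fin t =>
          if i = j then (0 : ZMod 2) else 1).mulVec y) = hammingNorm y)).card : ℚ)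
        / 2 ^ t
      = 1 / 2 + (t.choose (t / 2) : ℚ) / 2 ^ t := by
  have : Nonempty (Fin t) := ⟨⟨0, by grind⟩⟩
  rw [← Matrix.antiIdentity]
  set E : Finset (Fin t → ZMod 2) := {y | Even (hammingNorm y)}
  set M : Finset (Fin t → ZMod 2) := {y | hammingNorm y = t / 2}
  have hfilter : ({y | hammingNorm ((Matrix.antiIdentity (Fin t) (ZMod 2)).mulVec y) =
      hammingNorm y} : Finset (Fin t → ZMod 2)) = E ∪ M := by
    ext y
    simp only [E, M, mem_filter, mem_univ, true_and, mem_union,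
      hammingNorm_antiIdentity_mulVec_eq_iff, Fintype.card_fin]
    grind
  have hdisj : Disjoint E M :=
    disjoint_filter.mpr fun y _ hy hmid => Nat.not_even_iff_odd.mpr ht2 (hmid ▸ hy)
  have hE : (2 : ℚ) * #E = 2 ^ t := by
    exact_mod_cast Fintype.card_fin t ▸ two_mul_card_filter_even_hammingNorm (ι := Fin t)
  rw [hfilter, card_union_of_disjoint hdisj, card_filter_hammingNorm_eq, Fintype.card_fin]
  field_simp
  push_cast
  linarith
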